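/- Let G be a connected simple (undirected) graph on N ≥ 2 vertices with Laplacian L ∈ ℝ^{N×N}, fix a vertex i, and let Δ = e_i e_iᵀ be the diagonal matrix with a single 1 in position (i,i) and zeros elsewhere. Then L + Δ is positive definite; more precisely, vᵀ(L + Δ)v ≥ 4/(N(N²−N+4)) for every unit vector v ∈ ℝ^N. -/

import Mathlib

/-!
Along a path from `i` to `k`, which has at most `N - 1` edges and uses each edge once,
Cauchy–Schwarz gives `(v k - v i)² ≤ (N - 1) · vᵀ L v`. Writing `v k = v i + (v k - v i)`,
Young's inequality with weight `N² / 4` and a sum over `k ≠ i` bound `‖v‖²` by a multiple of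
`vᵀ L v + v i² = vᵀ (L + Δ) v`.
-/

open Matrix Finset

namespace SimpleGraph

variable {V : Type*} {G : SimpleGraph V}

lemma sum_darts_eq_sum_sum_adj [Fintype V] [DecidableRel G.Adj] {M : Type*} [AddCommMonoid M]
    (f : V → V → M) :
    ∑ d : G.Dart, f d.fst d.snd = ∑ x, ∑ y, if G.Adj x y then f x y else 0 := by
  rw [← Fintype.sum_prod_type', ← sum_filter]
  refine sum_bij (fun d _ => d.toProd) (fun d _ => by simp) (fun d _ e _ => Dart.ext d e) ?_
    fun _ _ => rfl
  intro p hp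
  exact ⟨⟨p, (mem_filter.mp hp).2⟩, mem_univ _, rfl⟩

namespace Walk

lemma sum_darts_sub {M : Type*} [AddCommGroup M] (v : V → M) {a b : V} (w : G.Walk a b) :
    (w.darts.map fun d => v d.fst - v d.snd).sum = v a - v b := by
  induction w with
  | nil => simp
  | cons _ p ih => rw [darts_cons, List.map_cons, List.sum_cons, ih]; abel

lemma IsTrail.darts_nodup {a b : V} {w : G.Walk a b} (hw : w.IsTrail) : w.darts.Nodup :=
  hw.edges_nodup.of_map _

end Walk

variable [DecidableEq V]

namespace Walk

lemma IsTrail.sq_sub_le_length_mul_sum_darts (v : V → ℝ) {a b : V} {w : G.Walk a b}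
    (hw : w.IsTrail) :
    (v a - v b) ^ 2 ≤ w.length * ∑ d ∈ w.darts.toFinset, (v d.fst - v d.snd) ^ 2 := by
  have hnd := hw.darts_nodup
  calc (v a - v b) ^ 2 = (∑ d ∈ w.darts.toFinset, (v d.fst - v d.snd)) ^ 2 := by
        rw [List.sum_toFinset _ hnd, sum_darts_sub]
    _ ≤ #w.darts.toFinset * ∑ d ∈ w.darts.toFinset, (v d.fst - v d.snd) ^ 2 :=
        sq_sum_le_card_mul_sum_sq
    _ = _ := by rw [List.toFinset_card_of_nodup hnd, length_darts]

lemma IsTrail.disjoint_darts_image_symm {a b : V} {w : G.Walk a b} (hw : w.IsTrail) :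
    Disjoint w.darts.toFinset (w.darts.toFinset.image Dart.symm) := by
  rw [Finset.disjoint_left]
  intro d hd hd'
  obtain ⟨e, he, rfl⟩ := mem_image.mp hd'
  rw [List.mem_toFinset] at hd he
  exact e.symm_ne (List.inj_on_of_nodup_map hw.edges_nodup hd he e.edge_symm)

lemma IsTrail.two_mul_sum_darts_le [Fintype V] [DecidableRel G.Adj] (f : G.Dart → ℝ)
    (hf : ∀ d, 0 ≤ f d) (hsymm : ∀ d, f d.symm = f d) {a b : V} {w : G.Walk a b}
    (hw : w.IsTrail) :
    2 * ∑ d ∈ w.darts.toFinset, f d ≤ ∑ d, f d := by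
  have himage :
      ∑ d ∈ w.darts.toFinset.image Dart.symm, f d = ∑ d ∈ w.darts.toFinset, f d := by
    rw [sum_image Dart.symm_involutive.injective.injOn]
    exact sum_congr rfl fun d _ => hsymm d
  calc 2 * ∑ d ∈ w.darts.toFinset, f d
      = ∑ d ∈ w.darts.toFinset ∪ w.darts.toFinset.image Dart.symm, f d := by
        rw [sum_union hw.disjoint_darts_image_symm, himage, two_mul]
    _ ≤ ∑ d, f d := sum_le_univ_sum_of_nonneg hf

end Walk

lemma dotProduct_lapMatrix_mulVec {R : Type*} [Field R] [CharZero R] [Fintype V]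
    [DecidableRel G.Adj] (v : V → R) :
    v ⬝ᵥ (G.lapMatrix R *ᵥ v) = (∑ d : G.Dart, (v d.fst - v d.snd) ^ 2) / 2 := by
  rw [← toLinearMap₂'_apply', lapMatrix_toLinearMap₂',
    sum_darts_eq_sum_sum_adj fun x y => (v x - v y) ^ 2]

lemma Connected.sq_sub_le_mul_dotProduct_lapMatrix_mulVec [Fintype V] [DecidableRel G.Adj]
    (hG : G.Connected) (v : V → ℝ) (a b : V) :
    (v a - v b) ^ 2 ≤ (Fintype.card V - 1) * (v ⬝ᵥ (G.lapMatrix ℝ *ᵥ v)) := by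
  obtain ⟨p, hp⟩ := hG.exists_isPath a b
  have hlen : (p.length : ℝ) ≤ Fintype.card V - 1 := by
    rw [le_sub_iff_add_le]
    exact_mod_cast hp.length_lt
  have hdarts : ∑ d ∈ p.darts.toFinset, (v d.fst - v d.snd) ^ 2 ≤
      v ⬝ᵥ (G.lapMatrix ℝ *ᵥ v) := by
    rw [dotProduct_lapMatrix_mulVec, le_div_iff₀ two_pos, mul_comm]
    exact hp.isTrail.two_mul_sum_darts_le (fun d => (v d.fst - v d.snd) ^ 2)
      (fun _ => sq_nonneg _) fun _ => sub_sq_comm _ _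
  calc (v a - v b) ^ 2 ≤ p.length * ∑ d ∈ p.darts.toFinset, (v d.fst - v d.snd) ^ 2 :=
        hp.isTrail.sq_sub_le_length_mul_sum_darts v
    _ ≤ (Fintype.card V - 1) * (v ⬝ᵥ (G.lapMatrix ℝ *ᵥ v)) :=
        mul_le_mul hlen hdarts (sum_nonneg fun _ _ => sq_nonneg _) (p.length.cast_nonneg.trans hlen)

end SimpleGraph

theorem four_mul_sum_sq_le_of_sq_sub_le {ι : Type*} [Fintype ι] [DecidableEq ι] (v : ι → ℝ)
    (i : ι) {Q : ℝ} (hQ : 0 ≤ Q) (h : ∀ k, (v k - v i) ^ 2 ≤ (Fintype.card ι - 1) * Q) :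
    4 * ∑ k, v k ^ 2 ≤
      Fintype.card ι * ((Fintype.card ι : ℝ) ^ 2 - Fintype.card ι + 4) * (Q + v i ^ 2) := by
  set n : ℝ := (Fintype.card ι : ℝ)
  have : Nonempty ι := ⟨i⟩
  have hn : 1 ≤ n := Nat.one_le_cast.mpr Fintype.card_pos
  -- Young's inequality; the weight `n² / 4` is what produces the constant `n (n² - n + 4)`.
  have hyoung : ∀ k, 4 * n ^ 2 * v k ^ 2 ≤
      n ^ 2 * (n ^ 2 + 4) * v i ^ 2 + 4 * (n ^ 2 + 4) * ((n - 1) * Q) := fun k => by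
    nlinarith [h k, sq_nonneg (n ^ 2 * v i - 4 * (v k - v i))]
  have hcard : (#(univ.erase i) : ℝ) = n - 1 := by
    rw [card_erase_of_mem (mem_univ i), card_univ, Nat.cast_pred Fintype.card_pos]
  have hrest : 4 * n ^ 2 * (∑ k, v k ^ 2 - v i ^ 2) ≤
      (n - 1) * (n ^ 2 * (n ^ 2 + 4) * v i ^ 2 + 4 * (n ^ 2 + 4) * ((n - 1) * Q)) := by
    calc 4 * n ^ 2 * (∑ k, v k ^ 2 - v i ^ 2) = ∑ k ∈ univ.erase i, 4 * n ^ 2 * v k ^ 2 := by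
          rw [← mul_sum, ← add_sum_erase _ _ (mem_univ i), add_sub_cancel_left]
      _ ≤ _ := by
          simpa only [nsmul_eq_mul, hcard] using
            sum_le_card_nsmul (univ.erase i) _ _ fun k _ => hyoung k
  -- With `m = n - 1` the difference is `m⁵ + 2m³ - 4m² + 13m + 4`.
  have hpoly : 4 * (n ^ 2 + 4) * (n - 1) ^ 2 ≤ n ^ 3 * (n ^ 2 - n + 4) := by
    nlinarith [sub_nonneg.2 hn, pow_nonneg (sub_nonneg.2 hn) 5,
      mul_nonneg (sub_nonneg.2 hn) (sq_nonneg (n - 2))]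
  have hn2 : 0 < n ^ 2 := by positivity
  refine le_of_mul_le_mul_left ?_ hn2
  nlinarith [mul_le_mul_of_nonneg_right hpoly hQ]

lemma Matrix.dotProduct_single_self_one_mulVec {n R : Type*} [Fintype n] [DecidableEq n]
    [CommSemiring R] (i : n) (v : n → R) : v ⬝ᵥ (single i i 1 *ᵥ v) = v i ^ 2 := by
  rw [single_mulVec_eq, one_mul, dotProduct_smul, dotProduct_single_one, smul_eq_mul, sq]

theorem laplacian_plus_single_pinning_posDef_general
    (N : ℕ) (G : SimpleGraph (Fin N)) [DecidableRel G.Adj]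
    (hconn : G.Connected) (L : Matrix (Fin N) (Fin N) ℝ) (hL : L = G.lapMatrix ℝ)
    (i : Fin N) (Δ : Matrix (Fin N) (Fin N) ℝ) (hΔ : Δ = Matrix.single i i 1) :
    (L + Δ).PosDef ∧
      ∀ v : Fin N → ℝ, (∑ k, v k ^ 2 = 1) →
        4 / ((N : ℝ) * ((N : ℝ) ^ 2 - (N : ℝ) + 4)) ≤ v ⬝ᵥ ((L + Δ).mulVec v) := by
  subst hL hΔ
  have hbound (v : Fin N → ℝ) : 4 * ∑ k, v k ^ 2 ≤
      N * ((N : ℝ) ^ 2 - N + 4) * v ⬝ᵥ ((G.lapMatrix ℝ + single i i 1) *ᵥ v) := by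
    rw [add_mulVec, dotProduct_add, dotProduct_single_self_one_mulVec]
    simpa using four_mul_sum_sq_le_of_sq_sub_le v i
      (by simpa using (G.posSemidef_lapMatrix ℝ).dotProduct_mulVec_nonneg v)
      fun k => hconn.sq_sub_le_mul_dotProduct_lapMatrix_mulVec v k i
  have hpos : (0 : ℝ) < N * ((N : ℝ) ^ 2 - N + 4) := by
    have : (1 : ℝ) ≤ N := by exact_mod_cast i.pos
    nlinarith
  refine ⟨.of_dotProduct_mulVec_pos ?_ fun v hv => ?_, fun v hv => ?_⟩
  · rw [← diagonal_single]
    exact (G.isHermitian_lapMatrix ℝ).add (isHermitian_diagonal _)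
  · have hsum : 0 < ∑ k, v k ^ 2 := by
      obtain ⟨k, hk⟩ := Function.ne_iff.mp hv
      exact sum_pos' (fun _ _ => sq_nonneg _) ⟨k, mem_univ _, sq_pos_of_ne_zero hk⟩
    rw [star_trivial]
    have h4 : (0 : ℝ) < 4 * ∑ k, v k ^ 2 := by positivity
    exact pos_of_mul_pos_right (h4.trans_le (hbound v)) hpos.le
  · rw [div_le_iff₀' hpos]
    simpa [hv] using hbound v

/-- For a connected simple graph on `N ≥ 2` vertices with Laplacian `L` and
`Δ = eᵢeᵢᵀ`, the matrix `L + Δ` is positive definite, and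
`vᵀ(L + Δ)v ≥ 4/(N(N² - N + 4))` for every (Euclidean) unit vector `v`. -/
theorem laplacian_plus_single_pinning_posDef
    (N : ℕ) (hN : 2 ≤ N) (G : SimpleGraph (Fin N)) [DecidableRel G.Adj]
    (hconn : G.Connected) (L : Matrix (Fin N) (Fin N) ℝ) (hL : L = G.lapMatrix ℝ)
    (i : Fin N) (Δ : Matrix (Fin N) (Fin N) ℝ) (hΔ : Δ = Matrix.single i i 1) :
    (L + Δ).PosDef ∧
      ∀ v : Fin N → ℝ, (∑ k, v k ^ 2 = 1) →
        4 / ((N : ℝ) * ((N : ℝ) ^ 2 - (N : ℝ) + 4)) ≤ v ⬝ᵥ ((L + Δ).mulVec v) :=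
  laplacian_plus_single_pinning_posDef_general N G hconn L hL i Δ hΔ
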